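/- The Local Price of Anarchy of local 2-type Swap Schelling Games on Δ-regular graphs, where Δ = 2α + β with α ≥ 1 and β ∈ {0,1}, is at most 2 + 1/α. Equivalently, in any local swap equilibrium on a Δ-regular graph the average utility of an agent is at least α/(2α+1). -/

import Mathlib

open SimpleGraph Finset
open scoped Classical

noncomputable def ssgUtil {V A : Type*} [Fintype V] [DecidableEq V]
    (G : SimpleGraph V) [DecidableRel G.Adj]
    {k : ℕ} (c : A → Fin k) (σ : A ≃ V) (i : A) : ℚ :=
  (((G.neighborFinset (σ i)).filter (fun v => c (σ.symm v) = c i)).card : ℚ) /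
    (G.degree (σ i) : ℚ)

def ssgSwap {V A : Type*} [DecidableEq V] (σ : A ≃ V) (i j : A) : A ≃ V :=
  σ.trans (Equiv.swap (σ i) (σ j))

def ssgProfitable {V A : Type*} [Fintype V] [DecidableEq V]
    (G : SimpleGraph V) [DecidableRel G.Adj]
    {k : ℕ} (c : A → Fin k) (σ : A ≃ V) (i j : A) : Prop :=
  c i ≠ c j ∧
    ssgUtil G c σ i < ssgUtil G c (ssgSwap σ i j) i ∧
    ssgUtil G c σ j < ssgUtil G c (ssgSwap σ i j) j

def ssgEquilibrium {V A : Type*} [Fintype V] [DecidableEq V]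
    (G : SimpleGraph V) [DecidableRel G.Adj]
    {k : ℕ} (c : A → Fin k) (σ : A ≃ V) : Prop :=
  ∀ i j : A, ¬ ssgProfitable G c σ i j

def ssgLocalEquilibrium {V A : Type*} [Fintype V] [DecidableEq V]
    (G : SimpleGraph V) [DecidableRel G.Adj]
    {k : ℕ} (c : A → Fin k) (σ : A ≃ V) : Prop :=
  ∀ i j : A, G.Adj (σ i) (σ j) → ¬ ssgProfitable G c σ i j

noncomputable def ssgWelfare {V A : Type*} [Fintype V] [DecidableEq V] [Fintype A]
    (G : SimpleGraph V) [DecidableRel G.Adj]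
    {k : ℕ} (c : A → Fin k) (σ : A ≃ V) : ℚ :=
  ∑ i : A, ssgUtil G c σ i

noncomputable def ssgPhi {V A : Type*} [Fintype V] [DecidableEq V]
    (G : SimpleGraph V) [DecidableRel G.Adj]
    {k : ℕ} (c : A → Fin k) (σ : A ≃ V) : ℕ :=
  (G.edgeFinset.filter (fun e => ∀ u ∈ e, ∀ v ∈ e, c (σ.symm u) = c (σ.symm v))).card

/-!
Write `d v` for the number of neighbours of `v` whose agent has the other colour. In a
`Δ`-regular graph the agent at `v` has utility `(Δ - d v) / Δ`, and after swapping along a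
bichromatic edge `uv` it has utility `(d v - 1) / Δ`. Hence the swap along `uv` is profitable for
both agents exactly when `d u + d v ≥ Δ + 2`, so in a local equilibrium `d u + d v ≤ Δ + 1` on
every bichromatic edge. Summing this over the (directed) bichromatic edges gives
`2 ∑ d² ≤ (Δ + 1) ∑ d`, while `d (Δ + 1 - d) ≤ ⌊(Δ + 1)² / 4⌋` for every integer `d`. Together,
`(Δ + 1) ∑ d ≤ 2 n ⌊(Δ + 1)² / 4⌋`, which for `Δ = 2α + β` is the bound
`∑ d ≤ n Δ (α + 1) / (2α + 1)`, i.e. welfare at least `n α / (2α + 1)`. Since no welfare exceeds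
`n`, the price of anarchy bound follows.
-/

theorem two_mul_sum_card_sq_le {V : Type*} [Fintype V] {F : V → Finset V}
    (hF : ∀ x y, y ∈ F x ↔ x ∈ F y) {m : ℕ} (h : ∀ x, ∀ y ∈ F x, #(F x) + #(F y) ≤ m) :
    2 * ∑ x, #(F x) ^ 2 ≤ m * ∑ x, #(F x) :=
  calc 2 * ∑ x, #(F x) ^ 2 = ∑ x, ∑ y ∈ F x, #(F x) + ∑ x, ∑ y ∈ F x, #(F y) := by
        rw [sum_comm' (t' := univ) (s' := F) (f := fun _ y => #(F y)) (by simp [hF])]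
        simp [sq, two_mul]
    _ = ∑ x, ∑ y ∈ F x, (#(F x) + #(F y)) := by simp only [sum_add_distrib]
    _ ≤ ∑ x, ∑ _y ∈ F x, m := sum_le_sum fun x _ => sum_le_sum (h x)
    _ = m * ∑ x, #(F x) := by simp [mul_sum, mul_comm]

theorem mul_le_mul_self_add_of_le_one {a b : ℕ} (hb : b ≤ 1) (x : ℕ) :
    (2 * a + b + 1) * x ≤ x * x + (a + b) * (a + 1) := by
  interval_cases b
  · rcases le_or_gt x a with h | h <;> nlinarith
  · nlinarith [sq_nonneg ((x : ℤ) - (a + 1))]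

lemma ssgSwap_comm {V A : Type*} [DecidableEq V] (σ : A ≃ V) (i j : A) :
    ssgSwap σ i j = ssgSwap σ j i := by
  rw [ssgSwap, ssgSwap, Equiv.swap_comm]

section

variable {V A : Type*} [Fintype V] (G : SimpleGraph V) [DecidableRel G.Adj]

section Colouring

variable {k : ℕ} (c : A → Fin k) (σ : A ≃ V)

noncomputable def ssgOtherNeighbors (v : V) : Finset V :=
  (G.neighborFinset v).filter fun w => c (σ.symm w) ≠ c (σ.symm v)

variable {G c σ} in
lemma mem_ssgOtherNeighbors {v w : V} :
    w ∈ ssgOtherNeighbors G c σ v ↔ G.Adj v w ∧ c (σ.symm w) ≠ c (σ.symm v) := by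
  simp [ssgOtherNeighbors]

lemma mem_ssgOtherNeighbors_comm (v w : V) :
    w ∈ ssgOtherNeighbors G c σ v ↔ v ∈ ssgOtherNeighbors G c σ w := by
  simp only [mem_ssgOtherNeighbors, G.adj_comm, ne_comm]

variable [DecidableEq V]

lemma ssgUtil_symm_apply (v : V) :
    ssgUtil G c σ (σ.symm v) = (G.degree v - #(ssgOtherNeighbors G c σ v) : ℚ) / G.degree v := by
  have hsplit := card_filter_add_card_filter_not (s := G.neighborFinset v)
    (p := fun w => c (σ.symm w) = c (σ.symm v))
  rw [card_neighborFinset_eq_degree] at hsplit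
  rw [ssgUtil, Equiv.apply_symm_apply, ← hsplit, ssgOtherNeighbors]
  push_cast
  ring

lemma ssgUtil_le_one (i : A) : ssgUtil G c σ i ≤ 1 :=
  div_le_one_of_le₀ (by exact_mod_cast card_filter_le _ _) (Nat.cast_nonneg _)

variable [Fintype A]

lemma ssgWelfare_le_card : ssgWelfare G c σ ≤ Fintype.card A := by
  rw [ssgWelfare]
  exact (sum_le_card_nsmul univ _ 1 fun i _ => ssgUtil_le_one G c σ i).trans_eq (by simp)

lemma ssgWelfare_eq_of_isRegularOfDegree {Δ : ℕ} (hreg : G.IsRegularOfDegree Δ) :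
    ssgWelfare G c σ =
      (Fintype.card V * Δ - ∑ v, #(ssgOtherNeighbors G c σ v) : ℚ) / Δ := by
  rw [ssgWelfare, ← Equiv.sum_comp σ.symm]
  simp only [ssgUtil_symm_apply, hreg _, ← sum_div, sum_sub_distrib, sum_const, card_univ,
    nsmul_eq_mul]
  push_cast
  ring

end Colouring

section TwoColours

variable [DecidableEq V] {c : A → Fin 2} {σ : A ≃ V}

lemma ssgUtil_ssgSwap_symm_apply {u v : V} (huv : G.Adj u v)
    (hc : c (σ.symm u) ≠ c (σ.symm v)) :
    ssgUtil G c (ssgSwap σ (σ.symm u) (σ.symm v)) (σ.symm u) =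
      (#(ssgOtherNeighbors G c σ v) - 1 : ℚ) / G.degree v := by
  have hswap : ssgSwap σ (σ.symm u) (σ.symm v) = σ.trans (Equiv.swap u v) := by
    simp [ssgSwap]
  -- with two colours, "same colour as the agent from `u`" means "other colour than the agent at `v`"
  have hsame : (G.neighborFinset v).filter
        (fun w => c ((σ.trans (Equiv.swap u v)).symm w) = c (σ.symm u)) =
      (ssgOtherNeighbors G c σ v).erase u := by
    ext w
    rw [mem_filter]
    simp only [mem_erase, mem_neighborFinset, mem_ssgOtherNeighbors, Equiv.symm_trans_apply,
      Equiv.symm_swap]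
    by_cases hwu : w = u
    · subst hwu
      simp [hc.symm]
    by_cases hwv : w = v
    · subst hwv
      simp
    rw [Equiv.swap_apply_of_ne_of_ne hwu hwv]
    have : ∀ a b x : Fin 2, a ≠ b → (x = a ↔ x ≠ b) := by decide
    simp [hwu, this _ _ (c (σ.symm w)) hc]
  have hu : u ∈ ssgOtherNeighbors G c σ v := mem_ssgOtherNeighbors.2 ⟨huv.symm, hc⟩
  have hto : (σ.trans (Equiv.swap u v)) (σ.symm u) = v := by simp
  rw [hswap, ssgUtil, hto, hsame, card_erase_of_mem hu, Nat.cast_sub (card_pos.2 ⟨u, hu⟩)]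
  norm_num

variable {G}

lemma ssgLocalEquilibrium.card_add_card_le (heq : ssgLocalEquilibrium G c σ) {Δ : ℕ}
    (hreg : G.IsRegularOfDegree Δ) {u v : V} (huv : G.Adj u v)
    (hc : c (σ.symm u) ≠ c (σ.symm v)) :
    #(ssgOtherNeighbors G c σ u) + #(ssgOtherNeighbors G c σ v) ≤ Δ + 1 := by
  have hΔ : (0 : ℚ) < Δ := by
    rw [← hreg u, Nat.cast_pos, ← card_neighborFinset_eq_degree]
    exact card_pos.2 ⟨v, (mem_neighborFinset _ _ _).2 huv⟩
  by_contra! hlarge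
  have hlarge' : (Δ : ℚ) + 2 ≤ #(ssgOtherNeighbors G c σ u) + #(ssgOtherNeighbors G c σ v) := by
    exact_mod_cast hlarge
  refine heq (σ.symm u) (σ.symm v) (by simpa using huv) ⟨hc, ?_, ?_⟩
  · rw [ssgUtil_ssgSwap_symm_apply G huv hc, ssgUtil_symm_apply, hreg u, hreg v]
    exact div_lt_div_of_pos_right (by linarith) hΔ
  · rw [ssgSwap_comm, ssgUtil_ssgSwap_symm_apply G huv.symm hc.symm, ssgUtil_symm_apply, hreg u,
      hreg v]
    exact div_lt_div_of_pos_right (by linarith) hΔ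

lemma ssgLocalEquilibrium.sum_card_ssgOtherNeighbors_le (heq : ssgLocalEquilibrium G c σ)
    {α β : ℕ} (hβ : β ≤ 1) (hreg : G.IsRegularOfDegree (2 * α + β)) :
    (2 * α + 1) * ∑ v, #(ssgOtherNeighbors G c σ v) ≤
      Fintype.card V * ((2 * α + β) * (α + 1)) := by
  set d := fun v => #(ssgOtherNeighbors G c σ v)
  have hsq : 2 * ∑ v, d v ^ 2 ≤ (2 * α + β + 1) * ∑ v, d v :=
    two_mul_sum_card_sq_le (mem_ssgOtherNeighbors_comm G c σ) fun u v huv =>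
      heq.card_add_card_le hreg (mem_ssgOtherNeighbors.1 huv).1 (mem_ssgOtherNeighbors.1 huv).2.symm
  have hpt : (2 * α + β + 1) * ∑ v, d v ≤ ∑ v, d v ^ 2 + Fintype.card V * ((α + β) * (α + 1)) :=
    calc (2 * α + β + 1) * ∑ v, d v = ∑ v, (2 * α + β + 1) * d v := mul_sum _ _ _
      _ ≤ ∑ v, (d v ^ 2 + (α + β) * (α + 1)) :=
          sum_le_sum fun v _ => sq (d v) ▸ mul_le_mul_self_add_of_le_one hβ (d v)
      _ = ∑ v, d v ^ 2 + Fintype.card V * ((α + β) * (α + 1)) := by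
          simp [sum_add_distrib]
  have hS : (2 * α + β + 1) * ∑ v, d v ≤ 2 * (Fintype.card V * ((α + β) * (α + 1))) := by
    linarith
  interval_cases β
  · linarith
  · have hS2 : 2 * (α + 1) * ∑ v, d v ≤ 2 * (α + 1) * (Fintype.card V * (α + 1)) := by
      linarith
    have hS' : ∑ v, d v ≤ Fintype.card V * (α + 1) := le_of_mul_le_mul_left hS2 (by positivity)
    calc (2 * α + 1) * ∑ v, d v ≤ (2 * α + 1) * (Fintype.card V * (α + 1)) :=
          Nat.mul_le_mul_left _ hS'
      _ = Fintype.card V * ((2 * α + 1) * (α + 1)) := by ring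

lemma ssgLocalEquilibrium.card_mul_le_ssgWelfare [Fintype A] (heq : ssgLocalEquilibrium G c σ)
    {α β : ℕ} (hα : 1 ≤ α) (hβ : β ≤ 1) (hreg : G.IsRegularOfDegree (2 * α + β)) :
    (Fintype.card A : ℚ) * (α / (2 * α + 1)) ≤ ssgWelfare G c σ := by
  have hsum : ((2 * α + 1) * ∑ v, #(ssgOtherNeighbors G c σ v) : ℚ) ≤
      Fintype.card V * ((2 * α + β) * (α + 1)) := by
    exact_mod_cast heq.sum_card_ssgOtherNeighbors_le hβ hreg
  rw [ssgWelfare_eq_of_isRegularOfDegree G c σ hreg, Fintype.card_congr σ, ← mul_div_assoc,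
    div_le_div_iff₀ (by positivity) (by positivity)]
  push_cast at hsum ⊢
  linarith

end TwoColours

end

theorem stmt12_general {V A : Type*} [Fintype V] [DecidableEq V] [Fintype A]
    (G : SimpleGraph V) [DecidableRel G.Adj]
    (α β : ℕ) (hα : 1 ≤ α) (hβ : β ≤ 1)
    (hreg : G.IsRegularOfDegree (2 * α + β))
    (c : A → Fin 2) (σ : A ≃ V) (heq : ssgLocalEquilibrium G c σ) :
    (Fintype.card A : ℚ) * ((α : ℚ) / (2 * (α : ℚ) + 1)) ≤ ssgWelfare G c σ ∧
    ∀ σ' : A ≃ V,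
      ssgWelfare G c σ' ≤ (2 + 1 / (α : ℚ)) * ssgWelfare G c σ := by
  have hlower := heq.card_mul_le_ssgWelfare hα hβ hreg
  refine ⟨hlower, fun σ' => ?_⟩
  have hα' : (0 : ℚ) < α := by exact_mod_cast hα
  calc ssgWelfare G c σ' ≤ Fintype.card A := ssgWelfare_le_card G c σ'
    _ = (2 + 1 / (α : ℚ)) * ((Fintype.card A : ℚ) * (α / (2 * α + 1))) := by field_simp
    _ ≤ (2 + 1 / (α : ℚ)) * ssgWelfare G c σ := by gcongr

theorem stmt12 {V A : Type*} [Fintype V] [DecidableEq V] [Fintype A]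
    (G : SimpleGraph V) [DecidableRel G.Adj] (hconn : G.Connected)
    (α β : ℕ) (hα : 1 ≤ α) (hβ : β ≤ 1)
    (hreg : G.IsRegularOfDegree (2 * α + β))
    (c : A → Fin 2) (σ : A ≃ V) (heq : ssgLocalEquilibrium G c σ) :
    (Fintype.card A : ℚ) * ((α : ℚ) / (2 * (α : ℚ) + 1)) ≤ ssgWelfare G c σ ∧
    ∀ σ' : A ≃ V,
      ssgWelfare G c σ' ≤ (2 + 1 / (α : ℚ)) * ssgWelfare G c σ :=
  stmt12_general G α β hα hβ hreg c σ heq
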